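/- Let f₁,…,f_N : ℝ^{m×n} → ℝ be differentiable and suppose there exists L_* > 0 such that ‖∇f_i(X) − ∇f_i(Y)‖_* ≤ L_*‖X − Y‖ for all X, Y ∈ ℝ^{m×n} and all i, where the norm on the right is the spectral norm. For stacked matrices U_{[N]}, V_{[N]} ∈ ℝ^{(Nm)×n} with blocks U_i, V_i, define ∇F(U_{[N]}) := [∇f₁(U₁)ᵀ,…,∇f_N(U_N)ᵀ]ᵀ. Then ‖∇F(U_{[N]}) − ∇F(V_{[N]})‖_* ≤ N L_* ‖U_{[N]} − V_{[N]}‖ for all U_{[N]}, V_{[N]} ∈ ℝ^{(Nm)×n}, where the left norm is nuclear and the right norm is spectral. -/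

import Mathlib

/-!
The nuclear and spectral norms are dual under the trace pairing: `tr (Qᵀ A) ≤ ‖Q‖ ‖A‖_*`, and
equality is attained by some `Q` with `‖Q‖ ≤ 1`, built from an orthogonal diagonalisation of
`Aᵀ A`. Pairing a stacked matrix with such a `Q` and splitting the trace along the row blocks
shows that the nuclear norm of a stack is at most the sum of the nuclear norms of its blocks,
while every block has spectral norm at most that of the stack. The Lipschitz bound applied
blockwise then gives the factor `N`.
-/

open Matrix Kronecker

/-- Spectral norm: ℓ²→ℓ² operator norm of a real matrix. -/
noncomputable def specNorm {ι κ : Type*} [Fintype ι] [Fintype κ] [DecidableEq κ]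
    (A : Matrix ι κ ℝ) : ℝ :=
  ‖LinearMap.toContinuousLinearMap (Matrix.toEuclideanLin A)‖

/-- The old Mathlib `Matrix.PosSemidef.sqrt` (removed upstream), with its old definition. -/
noncomputable def Matrix.PosSemidef.sqrt {n : Type*} [Fintype n] [DecidableEq n]
    {A : Matrix n n ℝ} (hA : Matrix.PosSemidef A) : Matrix n n ℝ :=
  hA.1.eigenvectorUnitary.1 * Matrix.diagonal ((↑) ∘ (√·) ∘ hA.1.eigenvalues) *
    (star hA.1.eigenvectorUnitary : Matrix n n ℝ)

/-- Nuclear norm: trace of the positive semidefinite square root of `Aᵀ * A`. -/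
noncomputable def nucNorm {ι κ : Type*} [Fintype ι] [Fintype κ] [DecidableEq κ]
    (A : Matrix ι κ ℝ) : ℝ :=
  Matrix.trace (Matrix.posSemidef_conjTranspose_mul_self A).sqrt

/-- Frobenius norm. -/
noncomputable def frobNorm {ι κ : Type*} [Fintype ι] [Fintype κ] (A : Matrix ι κ ℝ) : ℝ :=
  Real.sqrt (∑ i, ∑ j, (A i j) ^ 2)

/-- Trace inner product `⟨A, B⟩ = trace (Aᵀ B)`. -/
noncomputable def tin {ι κ : Type*} [Fintype ι] [Fintype κ] (A B : Matrix ι κ ℝ) : ℝ :=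
  Matrix.trace (Aᵀ * B)

/-- Vertical stacking of `N` matrices of size `m × n`. -/
def vstack {N m n : ℕ} (Y : Fin N → Matrix (Fin m) (Fin n) ℝ) :
    Matrix (Fin N × Fin m) (Fin n) ℝ :=
  fun p j => Y p.1 p.2 j

open WithLp

section SpectralNorm

variable {ι ι' κ : Type*} [Fintype ι] [Fintype ι'] [Fintype κ] [DecidableEq κ]

omit [DecidableEq κ] in
lemma norm_toLp_sq (v : κ → ℝ) : ‖toLp 2 v‖ ^ 2 = v ⬝ᵥ v := by
  rw [← real_inner_self_eq_norm_sq, EuclideanSpace.inner_toLp_toLp, star_trivial]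

omit [DecidableEq κ] in
lemma dotProduct_le_norm_mul_norm (u v : κ → ℝ) : u ⬝ᵥ v ≤ ‖toLp 2 u‖ * ‖toLp 2 v‖ := by
  simpa [EuclideanSpace.inner_toLp_toLp, dotProduct_comm] using
    real_inner_le_norm (toLp 2 u) (toLp 2 v)

lemma specNorm_nonneg (A : Matrix ι κ ℝ) : 0 ≤ specNorm A := norm_nonneg _

lemma norm_mulVec_le_specNorm_mul (A : Matrix ι κ ℝ) (x : κ → ℝ) :
    ‖toLp 2 (A *ᵥ x)‖ ≤ specNorm A * ‖toLp 2 x‖ :=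
  (LinearMap.toContinuousLinearMap (toEuclideanLin A)).le_opNorm (toLp 2 x)

lemma specNorm_le_of_norm_mulVec_le (A : Matrix ι κ ℝ) {c : ℝ} (hc : 0 ≤ c)
    (h : ∀ x, ‖toLp 2 (A *ᵥ x)‖ ≤ c * ‖toLp 2 x‖) : specNorm A ≤ c :=
  ContinuousLinearMap.opNorm_le_bound _ hc fun x => h x.ofLp

lemma specNorm_submatrix_le (A : Matrix ι κ ℝ) {e : ι' → ι} (he : Function.Injective e) :
    specNorm (A.submatrix e id) ≤ specNorm A := by
  refine specNorm_le_of_norm_mulVec_le _ (specNorm_nonneg A) fun x => ?_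
  refine le_trans ?_ (norm_mulVec_le_specNorm_mul A x)
  rw [EuclideanSpace.norm_eq, EuclideanSpace.norm_eq]
  refine Real.sqrt_le_sqrt ?_
  calc ∑ k, ‖(A.submatrix e id *ᵥ x) k‖ ^ 2 = ∑ i ∈ Finset.univ.map ⟨e, he⟩, ‖(A *ᵥ x) i‖ ^ 2 := by
        rw [Finset.sum_map]; rfl
    _ ≤ ∑ i, ‖(A *ᵥ x) i‖ ^ 2 := Finset.sum_le_univ_sum_of_nonneg fun _ => sq_nonneg _

end SpectralNorm

section NuclearNorm

variable {ι κ : Type*} [Fintype ι] [Fintype κ] [DecidableEq κ]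

lemma exists_orthogonal_diagonalization_nucNorm (A : Matrix ι κ ℝ) :
    ∃ (W : Matrix κ κ ℝ) (μ : κ → ℝ), W * Wᵀ = 1 ∧ Wᵀ * W = 1 ∧
      (A * W)ᵀ * (A * W) = diagonal μ ∧ nucNorm A = ∑ j, √(μ j) := by
  set hA := (posSemidef_conjTranspose_mul_self A).1
  refine ⟨hA.eigenvectorUnitary, hA.eigenvalues, hA.eigenvectorUnitary.2.2,
    hA.eigenvectorUnitary.2.1, ?_, ?_⟩
  · have h := hA.conjStarAlgAut_star_eigenvectorUnitary
    simp only [Unitary.conjStarAlgAut_apply, star_star, Unitary.coe_star,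
      RCLike.ofReal_real_eq_id, Function.id_comp] at h
    rw [transpose_mul, Matrix.mul_assoc]
    simp only [Matrix.mul_assoc] at h
    exact h
  · unfold nucNorm PosSemidef.sqrt
    rw [trace_mul_cycle, hA.eigenvectorUnitary.2.1, one_mul, trace_diagonal]
    simp

omit [Fintype κ] [DecidableEq κ] in
lemma transpose_mul_self_apply_diag (M : Matrix ι κ ℝ) (j : κ) :
    (Mᵀ * M) j j = ‖toLp 2 (Mᵀ j)‖ ^ 2 := by
  rw [norm_toLp_sq]
  exact mul_apply'

lemma nucNorm_nonneg (A : Matrix ι κ ℝ) : 0 ≤ nucNorm A := by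
  obtain ⟨W, μ, -, -, -, hnuc⟩ := exists_orthogonal_diagonalization_nucNorm A
  exact hnuc ▸ Finset.sum_nonneg fun j _ => Real.sqrt_nonneg _

lemma trace_transpose_mul_le_specNorm_mul_nucNorm (Q A : Matrix ι κ ℝ) :
    trace (Qᵀ * A) ≤ specNorm Q * nucNorm A := by
  obtain ⟨W, μ, hWWt, hWtW, hdiag, hnuc⟩ := exists_orthogonal_diagonalization_nucNorm A
  have hW : ∀ j, ‖toLp 2 (Wᵀ j)‖ = 1 := fun j => by
    have h := congr_fun (congr_fun hWtW j) j
    rwa [transpose_mul_self_apply_diag, one_apply_eq,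
      pow_eq_one_iff_of_nonneg (norm_nonneg _) two_ne_zero] at h
  have hAW : ∀ j, ‖toLp 2 ((A * W)ᵀ j)‖ = √(μ j) := fun j => by
    have h := congr_fun (congr_fun hdiag j) j
    rw [transpose_mul_self_apply_diag, diagonal_apply_eq] at h
    rw [← h, Real.sqrt_sq (norm_nonneg _)]
  calc trace (Qᵀ * A) = trace ((Q * W)ᵀ * (A * W)) := by
        rw [transpose_mul, Matrix.mul_assoc, trace_mul_comm Wᵀ, Matrix.mul_assoc,
          Matrix.mul_assoc, hWWt, Matrix.mul_one]
    _ = ∑ j, (Q *ᵥ Wᵀ j) ⬝ᵥ (A * W)ᵀ j := Finset.sum_congr rfl fun j _ => mul_apply'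
    _ ≤ ∑ j, specNorm Q * √(μ j) := Finset.sum_le_sum fun j _ => by
        refine (dotProduct_le_norm_mul_norm _ _).trans ?_
        rw [hAW]
        refine mul_le_mul_of_nonneg_right ?_ (Real.sqrt_nonneg _)
        simpa [hW] using norm_mulVec_le_specNorm_mul Q (Wᵀ j)
    _ = specNorm Q * nucNorm A := by rw [hnuc, Finset.mul_sum]

omit [DecidableEq κ] in
lemma norm_mulVec_sq (M : Matrix ι κ ℝ) (z : κ → ℝ) :
    ‖toLp 2 (M *ᵥ z)‖ ^ 2 = z ⬝ᵥ ((Mᵀ * M) *ᵥ z) := by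
  rw [norm_toLp_sq, ← mulVec_mulVec, dotProduct_mulVec z, vecMul_transpose]

lemma exists_specNorm_le_one_trace_eq_nucNorm (A : Matrix ι κ ℝ) :
    ∃ Q : Matrix ι κ ℝ, specNorm Q ≤ 1 ∧ trace (Qᵀ * A) = nucNorm A := by
  obtain ⟨W, μ, hWWt, -, hdiag, hnuc⟩ := exists_orthogonal_diagonalization_nucNorm A
  -- `Q = A W diag(μ^{-1/2}) Wᵀ`; the junk value `0⁻¹ = 0` handles the kernel of `A`.
  set f : κ → ℝ := fun j => (√(μ j))⁻¹
  have hf : ∀ j, f j ^ 2 * μ j ≤ 1 := fun j => by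
    rcases le_or_gt (μ j) 0 with h | h
    · simp [f, Real.sqrt_eq_zero'.2 h]
    · rw [inv_pow, Real.sq_sqrt h.le, inv_mul_cancel₀ h.ne']
  refine ⟨A * W * diagonal f * Wᵀ, ?_, ?_⟩
  · refine specNorm_le_of_norm_mulVec_le _ zero_le_one fun x => ?_
    set y := Wᵀ *ᵥ x
    have hy : ‖toLp 2 y‖ = ‖toLp 2 x‖ := by
      rw [← sq_eq_sq₀ (norm_nonneg _) (norm_nonneg _), norm_mulVec_sq, transpose_transpose,
        hWWt, one_mulVec, norm_toLp_sq]
    rw [one_mul, ← hy, ← pow_le_pow_iff_left₀ (norm_nonneg _) (norm_nonneg _) two_ne_zero,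
      ← mulVec_mulVec, ← mulVec_mulVec, norm_mulVec_sq, hdiag, norm_toLp_sq]
    simp only [mulVec_diagonal, dotProduct]
    refine Finset.sum_le_sum fun j _ => ?_
    nlinarith [hf j, mul_self_nonneg (y j)]
  · calc trace ((A * W * diagonal f * Wᵀ)ᵀ * A) = trace (diagonal f * ((A * W)ᵀ * (A * W))) := by
          rw [transpose_mul, transpose_mul, transpose_transpose, diagonal_transpose,
            Matrix.mul_assoc, Matrix.mul_assoc, trace_mul_comm W, Matrix.mul_assoc, Matrix.mul_assoc]
      _ = ∑ j, √(μ j) := by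
          simp only [hdiag, diagonal_mul_diagonal, trace_diagonal, f, inv_mul_eq_div, Real.div_sqrt]
      _ = nucNorm A := hnuc.symm

end NuclearNorm

section Blocks

variable {α ι κ : Type*} [Fintype α] [Fintype ι] [Fintype κ] [DecidableEq κ]

omit [DecidableEq κ] in
lemma trace_transpose_mul_eq_sum_blocks (P A : Matrix (α × ι) κ ℝ) :
    trace (Pᵀ * A) =
      ∑ a, trace ((P.submatrix (Prod.mk a) id)ᵀ * A.submatrix (Prod.mk a) id) := by
  simp only [trace, diag_apply, mul_apply, transpose_apply, Fintype.sum_prod_type,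
    submatrix_apply, id]
  exact Finset.sum_comm

lemma nucNorm_le_sum_nucNorm_blocks (A : Matrix (α × ι) κ ℝ) :
    nucNorm A ≤ ∑ a, nucNorm (A.submatrix (Prod.mk a) id) := by
  obtain ⟨Q, hQ, hQA⟩ := exists_specNorm_le_one_trace_eq_nucNorm A
  rw [← hQA, trace_transpose_mul_eq_sum_blocks]
  refine Finset.sum_le_sum fun a _ => (trace_transpose_mul_le_specNorm_mul_nucNorm _ _).trans ?_
  exact mul_le_of_le_one_left (nucNorm_nonneg _)
    ((specNorm_submatrix_le Q (Prod.mk_right_injective a)).trans hQ)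

end Blocks

section Stacking

variable {N m n : ℕ}

lemma vstack_sub_vstack (Y Z : Fin N → Matrix (Fin m) (Fin n) ℝ) :
    vstack Y - vstack Z = vstack fun i => Y i - Z i := rfl

lemma submatrix_vstack (Y : Fin N → Matrix (Fin m) (Fin n) ℝ) (i : Fin N) :
    (vstack Y).submatrix (Prod.mk i) id = Y i := rfl

lemma nucNorm_vstack_le_sum (Y : Fin N → Matrix (Fin m) (Fin n) ℝ) :
    nucNorm (vstack Y) ≤ ∑ i, nucNorm (Y i) := by
  simpa only [submatrix_vstack] using nucNorm_le_sum_nucNorm_blocks (vstack Y)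

lemma specNorm_le_specNorm_vstack (Y : Fin N → Matrix (Fin m) (Fin n) ℝ) (i : Fin N) :
    specNorm (Y i) ≤ specNorm (vstack Y) := by
  simpa only [submatrix_vstack] using
    specNorm_submatrix_le (vstack Y) (Prod.mk_right_injective i)

end Stacking

theorem stmt10_general {N m n : ℕ}
    (g : Fin N → Matrix (Fin m) (Fin n) ℝ → Matrix (Fin m) (Fin n) ℝ)
    (L : ℝ) (hL : 0 < L)
    (hLip : ∀ i X Y, nucNorm (g i X - g i Y) ≤ L * specNorm (X - Y)) :
    ∀ U V : Fin N → Matrix (Fin m) (Fin n) ℝ,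
      nucNorm (vstack (fun i => g i (U i)) - vstack (fun i => g i (V i)))
        ≤ (N : ℝ) * L * specNorm (vstack U - vstack V) := by
  intro U V
  rw [vstack_sub_vstack, vstack_sub_vstack]
  calc nucNorm (vstack fun i => g i (U i) - g i (V i))
      ≤ ∑ i, nucNorm (g i (U i) - g i (V i)) := nucNorm_vstack_le_sum _
    _ ≤ ∑ i, L * specNorm (U i - V i) := Finset.sum_le_sum fun i _ => hLip i _ _
    _ ≤ ∑ _i : Fin N, L * specNorm (vstack fun i => U i - V i) := Finset.sum_le_sum fun i _ =>
        mul_le_mul_of_nonneg_left (specNorm_le_specNorm_vstack (fun i => U i - V i) i) hL.le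
    _ = N * L * specNorm (vstack fun i => U i - V i) := by
        rw [Finset.sum_const, Finset.card_univ, Fintype.card_fin, nsmul_eq_mul, mul_assoc]

theorem stmt10 {N m n : ℕ} (hN : 0 < N)
    (f : Fin N → Matrix (Fin m) (Fin n) ℝ → ℝ)
    (g : Fin N → Matrix (Fin m) (Fin n) ℝ → Matrix (Fin m) (Fin n) ℝ)
    (hdiff : ∀ i X V, HasDerivAt (fun t : ℝ => f i (X + t • V)) (tin (g i X) V) 0)
    (L : ℝ) (hL : 0 < L)
    (hLip : ∀ i X Y, nucNorm (g i X - g i Y) ≤ L * specNorm (X - Y)) :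
    ∀ U V : Fin N → Matrix (Fin m) (Fin n) ℝ,
      nucNorm (vstack (fun i => g i (U i)) - vstack (fun i => g i (V i)))
        ≤ (N : ℝ) * L * specNorm (vstack U - vstack V) :=
  stmt10_general g L hL hLip
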